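/- In a dagger kernel category, for kernels m, n into X, the pullback of n along the effect E_m := m ∘ m† equals the Sasaki hook: E_m⁻¹(n) = m^⊥ ∨ (m ∧ n). Consequently the left adjoint ∃_{E_m} gives the 'and-then' operation k & m = m ∧ (m^⊥ ∨ k), and the Sasaki adjunction k & m ≤ n ⇔ k ≤ (m ⊃ n) holds. -/

import Mathlib

open CategoryTheory Limits

universe v u

class Dagger (C : Type u) [Category.{v} C] [HasZeroMorphisms C] where
  dag : ∀ {X Y : C}, (X ⟶ Y) → (Y ⟶ X)
  dag_dag : ∀ {X Y : C} (f : X ⟶ Y), dag (dag f) = f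
  dag_comp : ∀ {X Y Z : C} (f : X ⟶ Y) (g : Y ⟶ Z), dag (f ≫ g) = dag g ≫ dag f
  dag_id : ∀ (X : C), dag (𝟙 X) = 𝟙 X
  dag_zero : ∀ (X Y : C), dag (0 : X ⟶ Y) = 0

namespace Dagger

variable {C : Type u} [Category.{v} C] [HasZeroMorphisms C] [Dagger C]

/-- `f` is a dagger mono: `f† ∘ f = id`. -/
def DaggerMono {X Y : C} (f : X ⟶ Y) : Prop := f ≫ dag f = 𝟙 X

/-- `f` is a dagger epi: `f ∘ f† = id`. -/
def DaggerEpi {X Y : C} (f : X ⟶ Y) : Prop := dag f ≫ f = 𝟙 Y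

/-- `k` is a kernel of `f`. -/
structure IsKer {K X Y : C} (f : X ⟶ Y) (k : K ⟶ X) : Prop where
  comp_zero : k ≫ f = 0
  lift : ∀ {Z : C} (g : Z ⟶ X), g ≫ f = 0 → ∃! h : Z ⟶ K, h ≫ k = g

/-- `k` is a kernel of `f` which is moreover a dagger mono. -/
def IsDagKer {K X Y : C} (f : X ⟶ Y) (k : K ⟶ X) : Prop :=
  IsKer f k ∧ DaggerMono k

/-- `k` is a (dagger-monic) kernel of some map. -/
def KernelMap {K X : C} (k : K ⟶ X) : Prop :=
  ∃ (Y : C) (f : X ⟶ Y), IsDagKer f k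

/-- order of subobjects, by factorisation -/
def SubLE {M N X : C} (m : M ⟶ X) (n : N ⟶ X) : Prop :=
  ∃ φ : M ⟶ N, φ ≫ n = m

/-- equality of subobjects -/
def SubEq {M N X : C} (m : M ⟶ X) (n : N ⟶ X) : Prop :=
  SubLE m n ∧ SubLE n m

/-- `p` represents the orthocomplement `m^⊥ = ker(m†)` of `m`. -/
def IsOrthoOf {M P X : C} (m : M ⟶ X) (p : P ⟶ X) : Prop :=
  IsDagKer (dag m) p

/-- `w` is the meet (intersection) of the kernels `m` and `n` in `KSub(X)`. -/
def IsMeet {M N W X : C} (m : M ⟶ X) (n : N ⟶ X) (w : W ⟶ X) : Prop :=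
  KernelMap w ∧ SubLE w m ∧ SubLE w n ∧
    ∀ {K : C} (k : K ⟶ X), KernelMap k → SubLE k m → SubLE k n → SubLE k w

/-- `j` is the join `m ∨ n = (m^⊥ ∧ n^⊥)^⊥` in `KSub(X)`. -/
def IsJoin {M N J X : C} (m : M ⟶ X) (n : N ⟶ X) (j : J ⟶ X) : Prop :=
  ∃ (MP NP W : C) (mp : MP ⟶ X) (np : NP ⟶ X) (w : W ⟶ X),
    IsOrthoOf m mp ∧ IsOrthoOf n np ∧ IsMeet mp np w ∧ IsOrthoOf w j

/-- `p` represents the pullback `f⁻¹(n) = ker(coker(n) ∘ f)` of the kernel `n` along `f`. -/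
def IsInvImg {N P X Y : C} (f : X ⟶ Y) (n : N ⟶ Y) (p : P ⟶ X) : Prop :=
  ∃ (NP : C) (np : NP ⟶ Y), IsOrthoOf n np ∧ IsDagKer (f ≫ dag np) p

/-- `i` represents the image `ker(coker(f)) = ker(ker(f†)†)` of `f`. -/
def IsImg {I X Y : C} (f : X ⟶ Y) (i : I ⟶ Y) : Prop :=
  ∃ (K : C) (k : K ⟶ Y), IsDagKer (dag f) k ∧ IsDagKer (dag k) i

/-- zero-mono: `m ∘ f = 0` implies `f = 0`. -/
def ZeroMono {X Y : C} (m : X ⟶ Y) : Prop :=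
  ∀ {Z : C} (f : Z ⟶ X), f ≫ m = 0 → f = 0

/-- zero-epi: `f ∘ e = 0` implies `f = 0`. -/
def ZeroEpi {X Y : C} (e : X ⟶ Y) : Prop :=
  ∀ {Z : C} (f : Y ⟶ Z), e ≫ f = 0 → f = 0

end Dagger

/-- A dagger kernel category: a dagger category with a zero object in which
every morphism has a kernel that is a dagger mono. -/
class DagKerCat (C : Type u) [Category.{v} C] [HasZeroMorphisms C]
    [HasZeroObject C] extends Dagger C where
  hasKer : ∀ {X Y : C} (f : X ⟶ Y), ∃ (K : C) (k : K ⟶ X), Dagger.IsDagKer f k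

/-!
The effect `E = m ∘ m†` is self-adjoint and fixes every `q ≤ m` (`q ≫ E = q`), so for such `q` a
map `g` is orthogonal to `q` exactly when `g ≫ E` is. Everything else is phrased through
orthogonality `f ≫ g† = 0`: a kernel consists of the maps orthogonal to its orthocomplement, and
an image or a join `a ∨ b = (a^⊥ ∧ b^⊥)^⊥` is orthogonal to `q` exactly when its generators are.

For `E⁻¹(n) ≤ m^⊥ ∨ (m ∧ n)`: if `q` is orthogonal to `m^⊥` and to `m ∧ n`, then `q ≤ m`, and
`s ≫ E` factors through `m ∧ n`, so `s` is orthogonal to `q`. For `m ∧ (m^⊥ ∨ k) ≤ ∃_E k`: if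
`q` is orthogonal to `k ≫ E`, then `q ≫ E` is orthogonal to `k` and to `m^⊥`, hence to
`m^⊥ ∨ k`. The Sasaki adjunction is the composite of the adjunctions `∃_E ⊣ E⁻¹` on kernels.
-/

namespace Dagger

section

variable {C : Type u} [Category.{v} C]

lemma SubLE.refl {A X : C} (a : A ⟶ X) : SubLE a a :=
  ⟨𝟙 A, Category.id_comp a⟩

lemma SubLE.trans {A B D X : C} {a : A ⟶ X} {b : B ⟶ X} {d : D ⟶ X}
    (hab : SubLE a b) (hbd : SubLE b d) : SubLE a d := by
  obtain ⟨φ, rfl⟩ := hab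
  obtain ⟨ψ, rfl⟩ := hbd
  exact ⟨φ ≫ ψ, Category.assoc φ ψ d⟩

variable [HasZeroMorphisms C]

lemma SubLE.comp_eq_zero {A B X Y : C} {a : A ⟶ X} {b : B ⟶ X} {f : X ⟶ Y}
    (hab : SubLE a b) (hb : b ≫ f = 0) : a ≫ f = 0 := by
  obtain ⟨φ, rfl⟩ := hab
  rw [Category.assoc, hb, comp_zero]

variable [Dagger C]

lemma comp_dag_eq_zero_comm {A B X : C} {f : A ⟶ X} {g : B ⟶ X} (h : f ≫ dag g = 0) :
    g ≫ dag f = 0 := by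
  simpa only [dag_comp, dag_dag, dag_zero] using congrArg dag h

lemma IsDagKer.kernelMap {K X Y : C} {f : X ⟶ Y} {k : K ⟶ X} (hk : IsDagKer f k) :
    KernelMap k :=
  ⟨Y, f, hk⟩

lemma IsDagKer.subLE_iff {K X Y Z : C} {f : X ⟶ Y} {k : K ⟶ X} (hk : IsDagKer f k)
    {g : Z ⟶ X} : SubLE g k ↔ g ≫ f = 0 := by
  refine ⟨fun hg => hg.comp_eq_zero hk.1.comp_zero, fun hg => ?_⟩
  obtain ⟨h, hh, -⟩ := hk.1.lift g hg
  exact ⟨h, hh⟩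

lemma IsOrthoOf.isDagKer_dag {M P X Y : C} {f : X ⟶ Y} {m : M ⟶ X} {p : P ⟶ X}
    (hm : IsDagKer f m) (hp : IsOrthoOf m p) : IsDagKer (dag p) m := by
  refine ⟨⟨comp_dag_eq_zero_comm hp.1.comp_zero, fun g hg => hm.1.lift g ?_⟩, hm.2⟩
  have hfm : dag f ≫ dag m = 0 := by rw [← dag_comp, hm.1.comp_zero, dag_zero]
  obtain ⟨h, hh⟩ := (IsDagKer.subLE_iff hp).2 hfm
  rw [← dag_dag f, ← hh, dag_comp, ← Category.assoc, hg, zero_comp]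

lemma IsOrthoOf.subLE_iff {M P X Z : C} {m : M ⟶ X} {p : P ⟶ X} (hm : KernelMap m)
    (hp : IsOrthoOf m p) {g : Z ⟶ X} : SubLE g m ↔ g ≫ dag p = 0 := by
  obtain ⟨_, _, hm⟩ := hm
  exact (hp.isDagKer_dag hm).subLE_iff

lemma IsInvImg.kernelMap {N P X Y : C} {f : X ⟶ Y} {n : N ⟶ Y} {p : P ⟶ X}
    (hp : IsInvImg f n p) : KernelMap p := by
  obtain ⟨_, _, -, hp⟩ := hp
  exact hp.kernelMap

lemma IsInvImg.subLE_iff {N P X Y Z : C} {f : X ⟶ Y} {n : N ⟶ Y} {p : P ⟶ X}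
    (hp : IsInvImg f n p) (hn : KernelMap n) {g : Z ⟶ X} :
    SubLE g p ↔ SubLE (g ≫ f) n := by
  obtain ⟨_, np, hnp, hp⟩ := hp
  rw [hp.subLE_iff, hnp.subLE_iff hn, Category.assoc]

lemma IsImg.kernelMap {I X Y : C} {f : X ⟶ Y} {i : I ⟶ Y} (hi : IsImg f i) : KernelMap i := by
  obtain ⟨_, _, -, hi⟩ := hi
  exact hi.kernelMap

lemma IsImg.subLE {I X Y : C} {f : X ⟶ Y} {i : I ⟶ Y} (hi : IsImg f i) : SubLE f i := by
  obtain ⟨_, _, hk, hi⟩ := hi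
  exact hi.subLE_iff.2 (comp_dag_eq_zero_comm hk.1.comp_zero)

lemma IsImg.comp_dag_eq_zero {I X Y Z : C} {f : X ⟶ Y} {i : I ⟶ Y} (hi : IsImg f i)
    {q : Z ⟶ Y} (hq : f ≫ dag q = 0) : i ≫ dag q = 0 := by
  obtain ⟨_, _, hk, hi⟩ := hi
  exact comp_dag_eq_zero_comm ((hk.subLE_iff.2 (comp_dag_eq_zero_comm hq)).comp_eq_zero
    (comp_dag_eq_zero_comm hi.1.comp_zero))

lemma IsImg.subLE_of_forall {I X Y Z : C} {f : X ⟶ Y} {i : I ⟶ Y} (hi : IsImg f i)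
    {g : Z ⟶ Y} (hg : ∀ {Q : C} (q : Q ⟶ Y), f ≫ dag q = 0 → g ≫ dag q = 0) :
    SubLE g i := by
  obtain ⟨_, kf, hkf, hi⟩ := hi
  exact hi.subLE_iff.2 (hg kf (comp_dag_eq_zero_comm hkf.1.comp_zero))

lemma IsJoin.kernelMap {A B J X : C} {a : A ⟶ X} {b : B ⟶ X} {j : J ⟶ X}
    (hj : IsJoin a b j) : KernelMap j := by
  obtain ⟨_, _, _, _, _, _, -, -, -, hj⟩ := hj
  exact hj.kernelMap

lemma IsJoin.subLE_of_forall {A B J X Z : C} {a : A ⟶ X} {b : B ⟶ X} {j : J ⟶ X}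
    (hj : IsJoin a b j) {g : Z ⟶ X}
    (hg : ∀ {Q : C} (q : Q ⟶ X), a ≫ dag q = 0 → b ≫ dag q = 0 → g ≫ dag q = 0) :
    SubLE g j := by
  obtain ⟨_, _, _, _, _, q, ha, hb, hq, hj⟩ := hj
  exact (IsDagKer.subLE_iff hj).2 <| hg q
    (comp_dag_eq_zero_comm (hq.2.1.comp_eq_zero ha.1.comp_zero))
    (comp_dag_eq_zero_comm (hq.2.2.1.comp_eq_zero hb.1.comp_zero))

lemma dag_effect {M X : C} (m : M ⟶ X) : dag (dag m ≫ m) = dag m ≫ m := by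
  rw [dag_comp, dag_dag]

lemma comp_effect_subLE {M X Z : C} (m : M ⟶ X) (g : Z ⟶ X) : SubLE (g ≫ (dag m ≫ m)) m :=
  ⟨g ≫ dag m, Category.assoc _ _ _⟩

lemma SubLE.comp_effect {M Q X : C} {m : M ⟶ X} {q : Q ⟶ X} (hm : DaggerMono m)
    (hq : SubLE q m) : q ≫ (dag m ≫ m) = q := by
  obtain ⟨φ, rfl⟩ := hq
  rw [Category.assoc, ← Category.assoc m, hm, Category.id_comp]

lemma SubLE.comp_effect_comp_dag {M Q X Z : C} {m : M ⟶ X} {q : Q ⟶ X} (hm : DaggerMono m)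
    (hq : SubLE q m) (g : Z ⟶ X) : (g ≫ (dag m ≫ m)) ≫ dag q = g ≫ dag q := by
  conv_rhs => rw [← hq.comp_effect hm, dag_comp, dag_effect]
  rw [Category.assoc]

end

section

variable {C : Type u} [Category.{v} C] [HasZeroMorphisms C] [HasZeroObject C] [DagKerCat C]

lemma exists_isImg {X Y : C} (f : X ⟶ Y) : ∃ (I : C) (i : I ⟶ Y), IsImg f i := by
  obtain ⟨K, k, hk⟩ := DagKerCat.hasKer (dag f)
  obtain ⟨I, i, hi⟩ := DagKerCat.hasKer (dag k)
  exact ⟨I, i, K, k, hk, hi⟩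

lemma KernelMap.subLE_of_forall {K X Z : C} {k : K ⟶ X} (hk : KernelMap k) {g : Z ⟶ X}
    (hg : ∀ {Q : C} (q : Q ⟶ X), k ≫ dag q = 0 → g ≫ dag q = 0) : SubLE g k := by
  obtain ⟨_, p, hp⟩ := DagKerCat.hasKer (dag k)
  exact (IsOrthoOf.subLE_iff hk hp).2 (hg p (comp_dag_eq_zero_comm hp.1.comp_zero))

lemma IsImg.subLE_iff {I K X Y : C} {f : X ⟶ Y} {i : I ⟶ Y} (hi : IsImg f i) {k : K ⟶ Y}
    (hk : KernelMap k) : SubLE i k ↔ SubLE f k :=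
  ⟨hi.subLE.trans, fun hf =>
    hk.subLE_of_forall fun _ hq => hi.comp_dag_eq_zero (hf.comp_eq_zero hq)⟩

lemma IsMeet.subLE_of_subLE {M N W X Z : C} {m : M ⟶ X} {n : N ⟶ X} {w : W ⟶ X}
    (hw : IsMeet m n w) (hm : KernelMap m) (hn : KernelMap n) {g : Z ⟶ X}
    (hgm : SubLE g m) (hgn : SubLE g n) : SubLE g w := by
  obtain ⟨_, i, hi⟩ := exists_isImg g
  exact hi.subLE.trans
    (hw.2.2.2 i hi.kernelMap ((hi.subLE_iff hm).2 hgm) ((hi.subLE_iff hn).2 hgn))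

lemma IsJoin.comp_dag_eq_zero {A B J X Z : C} {a : A ⟶ X} {b : B ⟶ X} {j : J ⟶ X}
    (hj : IsJoin a b j) {g : Z ⟶ X} (hga : g ≫ dag a = 0) (hgb : g ≫ dag b = 0) :
    g ≫ dag j = 0 := by
  obtain ⟨_, _, _, _, _, _, ha, hb, hq, hj⟩ := hj
  exact (hq.subLE_of_subLE ha.kernelMap hb.kernelMap ((IsDagKer.subLE_iff ha).2 hga)
    ((IsDagKer.subLE_iff hb).2 hgb)).comp_eq_zero (comp_dag_eq_zero_comm hj.1.comp_zero)

lemma IsJoin.subLE_of_subLE {A B J K X : C} {a : A ⟶ X} {b : B ⟶ X} {j : J ⟶ X}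
    {k : K ⟶ X} (hj : IsJoin a b j) (hk : KernelMap k) (hak : SubLE a k) (hbk : SubLE b k) :
    SubLE j k :=
  hk.subLE_of_forall fun _ hq => comp_dag_eq_zero_comm <| hj.comp_dag_eq_zero
    (comp_dag_eq_zero_comm (hak.comp_eq_zero hq)) (comp_dag_eq_zero_comm (hbk.comp_eq_zero hq))

end

end Dagger

open Dagger in
theorem stmt13_general {C : Type u} [Category.{v} C] [HasZeroMorphisms C] [HasZeroObject C]
    [DagKerCat C] {M X N K S MP W J T U V : C}
    (m : M ⟶ X) (hm : KernelMap m) (n : N ⟶ X) (hn : KernelMap n)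
    (k : K ⟶ X)
    (s : S ⟶ X) (hs : IsInvImg (Dagger.dag m ≫ m) n s)
    (mp : MP ⟶ X) (hmp : IsOrthoOf m mp)
    (w : W ⟶ X) (hw : IsMeet m n w)
    (j : J ⟶ X) (hj : IsJoin mp w j)
    (t : T ⟶ X) (ht : IsImg (k ≫ (Dagger.dag m ≫ m)) t)
    (u : U ⟶ X) (hu : IsJoin mp k u)
    (v : V ⟶ X) (hv : IsMeet m u v) :
    SubEq s j ∧ SubEq t v ∧ (SubLE t n ↔ SubLE k s) := by
  have hmono : DaggerMono m := by obtain ⟨_, _, hm⟩ := hm; exact hm.2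
  have le_m_of_perp {Q : C} {q : Q ⟶ X} (hq : mp ≫ dag q = 0) : SubLE q m :=
    (hmp.subLE_iff hm).2 (comp_dag_eq_zero_comm hq)
  have s_le_j : SubLE s j := hj.subLE_of_forall fun _ hq hwq => by
    have hsE_w : SubLE (s ≫ (dag m ≫ m)) w := hw.subLE_of_subLE hm hn
      (comp_effect_subLE m s) ((hs.subLE_iff hn).1 (SubLE.refl s))
    rw [← (le_m_of_perp hq).comp_effect_comp_dag hmono]
    exact hsE_w.comp_eq_zero hwq
  have mp_le_s : SubLE mp s := (hs.subLE_iff hn).2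
    ⟨0, by rw [← Category.assoc, hmp.1.comp_zero, zero_comp, zero_comp]⟩
  have w_le_s : SubLE w s := (hs.subLE_iff hn).2 (by rw [hw.2.1.comp_effect hmono]; exact hw.2.2.1)
  have kE_le_u : SubLE (k ≫ (dag m ≫ m)) u := hu.subLE_of_forall fun _ hq hkq => by
    rwa [(le_m_of_perp hq).comp_effect_comp_dag hmono]
  have t_le_v : SubLE t v := hv.2.2.2 t ht.kernelMap ((ht.subLE_iff hm).2 (comp_effect_subLE m k))
    ((ht.subLE_iff hu.kernelMap).2 kE_le_u)
  have v_le_t : SubLE v t := ht.subLE_of_forall fun q hq => by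
    have hqE_u : (q ≫ (dag m ≫ m)) ≫ dag u = 0 := hu.comp_dag_eq_zero
      (by rw [Category.assoc, Category.assoc, comp_dag_eq_zero_comm hmp.1.comp_zero, comp_zero,
        comp_zero])
      (comp_dag_eq_zero_comm (by rwa [dag_comp, dag_effect, ← Category.assoc]))
    rw [← hv.2.1.comp_effect hmono, Category.assoc, ← dag_effect m, ← dag_comp]
    exact hv.2.2.1.comp_eq_zero (comp_dag_eq_zero_comm hqE_u)
  exact ⟨⟨s_le_j, hj.subLE_of_subLE hs.kernelMap mp_le_s w_le_s⟩, ⟨t_le_v, v_le_t⟩,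
    (ht.subLE_iff hn).trans (hs.subLE_iff hn).symm⟩

open Dagger in
/-- for kernels `m, n` into `X`, the pullback of `n` along the
effect `E_m = m ∘ m†` is the Sasaki hook `m ⊃ n = m^⊥ ∨ (m ∧ n)`; the left
adjoint `∃_{E_m}` gives `k & m = m ∧ (m^⊥ ∨ k)`, and the Sasaki adjunction
`k & m ≤ n ⇔ k ≤ (m ⊃ n)` holds. -/
theorem stmt13 {C : Type u} [Category.{v} C] [HasZeroMorphisms C] [HasZeroObject C]
    [DagKerCat C] {M X N K S MP W J T U V : C}
    (m : M ⟶ X) (hm : KernelMap m) (n : N ⟶ X) (hn : KernelMap n)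
    (k : K ⟶ X) (hk : KernelMap k)
    (s : S ⟶ X) (hs : IsInvImg (Dagger.dag m ≫ m) n s)
    (mp : MP ⟶ X) (hmp : IsOrthoOf m mp)
    (w : W ⟶ X) (hw : IsMeet m n w)
    (j : J ⟶ X) (hj : IsJoin mp w j)
    (t : T ⟶ X) (ht : IsImg (k ≫ (Dagger.dag m ≫ m)) t)
    (u : U ⟶ X) (hu : IsJoin mp k u)
    (v : V ⟶ X) (hv : IsMeet m u v) :
    SubEq s j ∧ SubEq t v ∧ (SubLE t n ↔ SubLE k s) :=
  stmt13_general m hm n hn k s hs mp hmp w hw j hj t ht u hu v hv
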